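/- Suppose t > B⁺ = (b−1)*(a+b) − b*(d+1). Let S⁺₁₂(t) = {v ∈ O⁺_t : v0 < b} and S⁺₀₂(t) = {v ∈ O⁺_t : v1 < a+b} (and analogously for t+ρ). Then φ12 restricts to a bijection from S⁺₁₂(t) onto S⁺₁₂(t+ρ), and φ02 restricts to a bijection from S⁺₀₂(t) onto S⁺₀₂(t+ρ). -/
import Mathlib


/-- The factorization homomorphism `π_t` for the shifted numerical semigroup
`M_t = ⟨t - d*a, t, t + d*b⟩`, applied to `v = (v0, v1, v2) ∈ ℤ³`. -/
def pi3 (a b d t : ℤ) (v : ℤ × ℤ × ℤ) : ℤ :=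
  (t - d * a) * v.1 + t * v.2.1 + (t + d * b) * v.2.2

/-- The length (coordinate sum) `ℓ(v)` of `v ∈ ℤ³`. -/
def len3 (v : ℤ × ℤ × ℤ) : ℤ := v.1 + v.2.1 + v.2.2

/-- The trade lattice `L_t = ker π_t`. -/
def L3 (a b d t : ℤ) : Set (ℤ × ℤ × ℤ) := {v | pi3 a b d t v = 0}

/-- The orthant `O⁺_t = {v ∈ L_t : v0 ≥ 0, v1 ≥ 0}`. -/
def OPlus (a b d t : ℤ) : Set (ℤ × ℤ × ℤ) :=
  {v ∈ L3 a b d t | 0 ≤ v.1 ∧ 0 ≤ v.2.1}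

/-- The orthant `O±_t = {v ∈ L_t : v0 ≥ 0, v2 ≥ 0}`. -/
def OPm (a b d t : ℤ) : Set (ℤ × ℤ × ℤ) :=
  {v ∈ L3 a b d t | 0 ≤ v.1 ∧ 0 ≤ v.2.2}

/-- The orthant `O⁻_t = {v ∈ L_t : v1 ≥ 0, v2 ≥ 0}`. -/
def OMinus (a b d t : ℤ) : Set (ℤ × ℤ × ℤ) :=
  {v ∈ L3 a b d t | 0 ≤ v.2.1 ∧ 0 ≤ v.2.2}

/-- `φ01(v) = v + b*(a+b)*ℓ(v)*(1, -1, 0)`. -/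
def phi01 (a b : ℤ) (v : ℤ × ℤ × ℤ) : ℤ × ℤ × ℤ :=
  v + (b * (a + b) * len3 v) • ((1 : ℤ), (-1 : ℤ), (0 : ℤ))

/-- `φ02(v) = v + a*b*ℓ(v)*(1, 0, -1)`. -/
def phi02 (a b : ℤ) (v : ℤ × ℤ × ℤ) : ℤ × ℤ × ℤ :=
  v + (a * b * len3 v) • ((1 : ℤ), (0 : ℤ), (-1 : ℤ))

/-- `φ12(v) = v + a*(a+b)*ℓ(v)*(0, 1, -1)`. -/
def phi12 (a b : ℤ) (v : ℤ × ℤ × ℤ) : ℤ × ℤ × ℤ :=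
  v + (a * (a + b) * len3 v) • ((0 : ℤ), (1 : ℤ), (-1 : ℤ))

/-- `v` is reducible in the orthant `O` if it is a sum of two nonzero elements of `O`. -/
def Reducible (O : Set (ℤ × ℤ × ℤ)) (v : ℤ × ℤ × ℤ) : Prop :=
  ∃ u w : ℤ × ℤ × ℤ, u ∈ O ∧ w ∈ O ∧ u ≠ 0 ∧ w ≠ 0 ∧ v = u + w

/-- The Hilbert basis of the orthant `O`: its irreducible elements. -/
def HB (O : Set (ℤ × ℤ × ℤ)) : Set (ℤ × ℤ × ℤ) :=
  {v ∈ O | v ≠ 0 ∧ ¬ Reducible O v}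

/-- `Ŝ_t = {v ∈ O±_t : v0 ≤ b or v2 ≤ a}`. -/
def Shat (a b d t : ℤ) : Set (ℤ × ℤ × ℤ) :=
  {v ∈ OPm a b d t | v.1 ≤ b ∨ v.2.2 ≤ a}

/-- The piecewise map `φ̂`, given by `φ12` when `v0 ≤ b`, and `φ01` otherwise. -/
def phihat (a b : ℤ) (v : ℤ × ℤ × ℤ) : ℤ × ℤ × ℤ :=
  if v.1 ≤ b then phi12 a b v else phi01 a b v

def psi12 (a b : ℤ) (v : ℤ × ℤ × ℤ) : ℤ × ℤ × ℤ :=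
  v + (a * (a + b) * len3 v) • ((0 : ℤ), (-1 : ℤ), (1 : ℤ))
def psi02 (a b : ℤ) (v : ℤ × ℤ × ℤ) : ℤ × ℤ × ℤ :=
  v + (a * b * len3 v) • ((-1 : ℤ), (0 : ℤ), (1 : ℤ))
lemma phi12_eq (a b : ℤ) (v : ℤ × ℤ × ℤ) :
    phi12 a b v = (v.1, v.2.1 + a*(a+b)*len3 v, v.2.2 - a*(a+b)*len3 v) := by
  unfold phi12; ext <;> simp <;> ring
lemma psi12_eq (a b : ℤ) (v : ℤ × ℤ × ℤ) :
    psi12 a b v = (v.1, v.2.1 - a*(a+b)*len3 v, v.2.2 + a*(a+b)*len3 v) := by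
  unfold psi12; ext <;> simp <;> ring
lemma phi02_eq (a b : ℤ) (v : ℤ × ℤ × ℤ) :
    phi02 a b v = (v.1 + a*b*len3 v, v.2.1, v.2.2 - a*b*len3 v) := by
  unfold phi02; ext <;> simp <;> ring
lemma psi02_eq (a b : ℤ) (v : ℤ × ℤ × ℤ) :
    psi02 a b v = (v.1 - a*b*len3 v, v.2.1, v.2.2 + a*b*len3 v) := by
  unfold psi02; ext <;> simp <;> ring
lemma len3_mk (x y z : ℤ) : len3 (x, y, z) = x + y + z := rfl
lemma len3_phi12 (a b : ℤ) (v : ℤ × ℤ × ℤ) : len3 (phi12 a b v) = len3 v := by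
  rw [phi12_eq, len3_mk]; unfold len3; ring
lemma len3_psi12 (a b : ℤ) (v : ℤ × ℤ × ℤ) : len3 (psi12 a b v) = len3 v := by
  rw [psi12_eq, len3_mk]; unfold len3; ring
lemma len3_phi02 (a b : ℤ) (v : ℤ × ℤ × ℤ) : len3 (phi02 a b v) = len3 v := by
  rw [phi02_eq, len3_mk]; unfold len3; ring
lemma len3_psi02 (a b : ℤ) (v : ℤ × ℤ × ℤ) : len3 (psi02 a b v) = len3 v := by
  rw [psi02_eq, len3_mk]; unfold len3; ring
lemma psi12_phi12 (a b : ℤ) (v : ℤ × ℤ × ℤ) : psi12 a b (phi12 a b v) = v := by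
  rw [psi12_eq, len3_phi12, phi12_eq]; ext <;> simp <;> ring
lemma phi12_psi12 (a b : ℤ) (v : ℤ × ℤ × ℤ) : phi12 a b (psi12 a b v) = v := by
  rw [phi12_eq, len3_psi12, psi12_eq]; ext <;> simp <;> ring
lemma psi02_phi02 (a b : ℤ) (v : ℤ × ℤ × ℤ) : psi02 a b (phi02 a b v) = v := by
  rw [psi02_eq, len3_phi02, phi02_eq]; ext <;> simp <;> ring
lemma phi02_psi02 (a b : ℤ) (v : ℤ × ℤ × ℤ) : phi02 a b (psi02 a b v) = v := by
  rw [phi02_eq, len3_psi02, psi02_eq]; ext <;> simp <;> ring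
lemma mem_OPlus_iff (a b d s : ℤ) (v : ℤ × ℤ × ℤ) :
    v ∈ OPlus a b d s ↔
      (s + d*b) * len3 v = d * ((a+b)*v.1 + b*v.2.1) ∧ 0 ≤ v.1 ∧ 0 ≤ v.2.1 := by
  have h : pi3 a b d s v = (s + d*b) * len3 v - d * ((a+b)*v.1 + b*v.2.1) := by
    unfold pi3 len3; ring
  unfold OPlus L3
  simp only [Set.mem_setOf_eq, Set.mem_sep_iff, h]
  constructor
  · rintro ⟨h1, h2⟩; exact ⟨by linarith, h2⟩
  · rintro ⟨h1, h2⟩; exact ⟨by linarith, h2⟩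
lemma key (d T c s q : ℤ) (ℓ : ℤ) (hd : 1 ≤ d) (hc : 1 ≤ c) (hT : 0 < T)
    (hdl : d ∣ ℓ) (hl : 1 ≤ ℓ)
    (heq : d * c * s = ℓ * T - q) (hq : q < d * (T + c)) : 0 ≤ s := by
  have hdl' : d ≤ ℓ := Int.le_of_dvd (by linarith) hdl
  have h1 : d * T ≤ ℓ * T := mul_le_mul_of_nonneg_right hdl' hT.le
  by_contra hs
  push_neg at hs
  have h2 : d * c * s ≤ d * c * (-1) :=
    mul_le_mul_of_nonneg_left (by linarith) (by positivity)
  nlinarith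
lemma len_nonneg (T M ℓ : ℤ) (hT : 0 < T) (hM : 0 ≤ M) (heq : T * ℓ = M) : 0 ≤ ℓ := by
  by_contra h
  push_neg at h
  nlinarith
lemma d_dvd_len (d t C ℓ M : ℤ) (htd : Int.gcd t d = 1)
    (heq : (t + d * C) * ℓ = d * M) : d ∣ ℓ := by
  have hco : IsCoprime d t := by
    rw [Int.isCoprime_iff_gcd_eq_one, Int.gcd_comm]; exact htd
  have hco2 : IsCoprime d (t + d * C) := hco.add_mul_left_right C
  exact hco2.dvd_of_dvd_mul_left ⟨M, heq⟩

theorem ppn_strip_bijections (a b d t : ℤ) (ha : 1 ≤ a) (hb : 1 ≤ b) (hd : 1 ≤ d)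
    (hab : Int.gcd a b = 1) (ht : d * a < t) (htd : Int.gcd t d = 1)
    (hBp : (b - 1) * (a + b) - b * (d + 1) < t) :
    Set.BijOn (phi12 a b)
      {v ∈ OPlus a b d t | v.1 < b}
      {v ∈ OPlus a b d (t + d * a * b * (a + b)) | v.1 < b} ∧
    Set.BijOn (phi02 a b)
      {v ∈ OPlus a b d t | v.2.1 < a + b}
      {v ∈ OPlus a b d (t + d * a * b * (a + b)) | v.2.1 < a + b} := by
  have hda : (0:ℤ) < d * a := by positivity
  have hdb : (0:ℤ) < d * b := by positivity
  have hrho : (0:ℤ) < d * a * b * (a + b) := by positivity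
  have hT : (0:ℤ) < t + d * b := by linarith
  have hT' : (0:ℤ) < t + d * a * b * (a + b) + d * b := by linarith
  constructor
  · -- φ12
    apply Set.InvOn.bijOn (f' := psi12 a b)
    · exact ⟨fun v _ => psi12_phi12 a b v, fun v _ => phi12_psi12 a b v⟩
    · -- MapsTo forward
      rintro v ⟨hv, hvlt⟩
      rw [mem_OPlus_iff] at hv
      obtain ⟨heq, h0, h1⟩ := hv
      have hl : 0 ≤ len3 v :=
        len_nonneg (t + d*b) _ (len3 v) hT (by positivity) heq
      refine ⟨?_, ?_⟩
      · rw [mem_OPlus_iff, phi12_eq, len3_mk]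
        refine ⟨?_, h0, ?_⟩
        · have : len3 v = v.1 + v.2.1 + v.2.2 := rfl
          rw [this] at heq ⊢
          linear_combination heq
        · have : (0:ℤ) ≤ a*(a+b)*len3 v := by positivity
          simpa using by linarith
      · rw [phi12_eq]; exact hvlt
    · -- MapsTo backward
      rintro w ⟨hw, hwlt⟩
      rw [mem_OPlus_iff] at hw
      obtain ⟨heq, h0, h1⟩ := hw
      have hl : 0 ≤ len3 w :=
        len_nonneg _ _ (len3 w) hT' (by positivity) heq
      have hs : 0 ≤ w.2.1 - a*(a+b)*len3 w := by
        rcases eq_or_lt_of_le hl with hl0 | hl1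
        · rw [← hl0]; simpa using h1
        · have hdl : d ∣ len3 w := by
            apply d_dvd_len d t (a*b*(a+b) + b) (len3 w) ((a+b)*w.1 + b*w.2.1) htd
            linear_combination heq
          apply key d (t + d*b) b _ (d*((a+b)*w.1)) (len3 w) hd hb hT hdl hl1
          · linear_combination -heq
          · have hw1 : w.1 ≤ b - 1 := by linarith
            have h3 : (a+b)*w.1 ≤ (a+b)*(b-1) :=
              mul_le_mul_of_nonneg_left hw1 (by positivity)
            have h4 : d*((a+b)*w.1) ≤ d*((a+b)*(b-1)) :=
              mul_le_mul_of_nonneg_left h3 (by positivity)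
            have h5 : (a+b)*(b-1) < t + d*b + b := by nlinarith
            have h6 : d*((a+b)*(b-1)) < d*(t + d*b + b) :=
              mul_lt_mul_of_pos_left h5 (by linarith)
            calc d*((a+b)*w.1) ≤ d*((a+b)*(b-1)) := h4
              _ < d*(t + d*b + b) := h6
      refine ⟨?_, ?_⟩
      · rw [mem_OPlus_iff, psi12_eq, len3_mk]
        refine ⟨?_, h0, hs⟩
        have : len3 w = w.1 + w.2.1 + w.2.2 := rfl
        rw [this] at heq ⊢
        linear_combination heq
      · rw [psi12_eq]; exact hwlt
  · -- φ02
    apply Set.InvOn.bijOn (f' := psi02 a b)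
    · exact ⟨fun v _ => psi02_phi02 a b v, fun v _ => phi02_psi02 a b v⟩
    · rintro v ⟨hv, hvlt⟩
      rw [mem_OPlus_iff] at hv
      obtain ⟨heq, h0, h1⟩ := hv
      have hl : 0 ≤ len3 v :=
        len_nonneg (t + d*b) _ (len3 v) hT (by positivity) heq
      refine ⟨?_, ?_⟩
      · rw [mem_OPlus_iff, phi02_eq, len3_mk]
        refine ⟨?_, ?_, h1⟩
        · have : len3 v = v.1 + v.2.1 + v.2.2 := rfl
          rw [this] at heq ⊢
          linear_combination heq
        · have : (0:ℤ) ≤ a*b*len3 v := by positivity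
          simpa using by linarith
      · rw [phi02_eq]; exact hvlt
    · rintro w ⟨hw, hwlt⟩
      rw [mem_OPlus_iff] at hw
      obtain ⟨heq, h0, h1⟩ := hw
      have hl : 0 ≤ len3 w :=
        len_nonneg _ _ (len3 w) hT' (by positivity) heq
      have hs : 0 ≤ w.1 - a*b*len3 w := by
        rcases eq_or_lt_of_le hl with hl0 | hl1
        · rw [← hl0]; simpa using h0
        · have hdl : d ∣ len3 w := by
            apply d_dvd_len d t (a*b*(a+b) + b) (len3 w) ((a+b)*w.1 + b*w.2.1) htd
            linear_combination heq
          apply key d (t + d*b) (a+b) _ (d*(b*w.2.1)) (len3 w) hd (by linarith) hT hdl hl1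
          · linear_combination -heq
          · have hw1 : w.2.1 ≤ a + b - 1 := by linarith
            have h3 : b*w.2.1 ≤ b*(a+b-1) :=
              mul_le_mul_of_nonneg_left hw1 (by positivity)
            have h4 : d*(b*w.2.1) ≤ d*(b*(a+b-1)) :=
              mul_le_mul_of_nonneg_left h3 (by positivity)
            have h5 : b*(a+b-1) < t + d*b + (a+b) := by nlinarith
            have h6 : d*(b*(a+b-1)) < d*(t + d*b + (a+b)) :=
              mul_lt_mul_of_pos_left h5 (by linarith)
            calc d*(b*w.2.1) ≤ d*(b*(a+b-1)) := h4
              _ < d*(t + d*b + (a+b)) := h6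
      refine ⟨?_, ?_⟩
      · rw [mem_OPlus_iff, psi02_eq, len3_mk]
        refine ⟨?_, hs, h1⟩
        have : len3 w = w.1 + w.2.1 + w.2.2 := rfl
        rw [this] at heq ⊢
        linear_combination heq
      · rw [psi02_eq]; exact hwlt
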